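/- Let u > −1 and z ∈ [0,1) be real numbers with z(1+u) < 1. Then the function v ↦ F(z,u,v) is differentiable at v = 1, and its derivative there equals E(z,u) := 2u(1+u)/(1−z(1+u))²·log(1/(1−z)) − 2u/((1−z)²(1+u)²)·log(1/(1−z(1+u))) + zu·(1 − 2z − 3u + z² + uz − 2u² + 2uz² + 3u²z + u²z²)/((1−z)²(1+u)(1−z(1+u))²). -/

import Mathlib

/-- `Ω = √(1 − 4(1+u)v(1−v))`. -/
noncomputable def OmegaR (u v : ℝ) : ℝ := Real.sqrt (1 - 4 * (1 + u) * v * (1 - v))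

/-- The denominator of `Φ(z,u,v)`:
`(Ω + 1 − 2v(1+u) + (1−z)^Ω·(Ω − 1 + 2v(1+u)))·(1−z)`, with `(1−z)^Ω = exp(Ω·log(1−z))`. -/
noncomputable def denPhi (z u v : ℝ) : ℝ :=
  (OmegaR u v + 1 - 2 * v * (1 + u)
    + Real.exp (OmegaR u v * Real.log (1 - z)) * (OmegaR u v - 1 + 2 * v * (1 + u)))
    * (1 - z)

/-- The explicit solution (4):
`Φ(z,u,v) = (Ω + 1 − 2v + (1−z)^Ω·(Ω − 1 + 2v)) / ((Ω + 1 − 2v(1+u) + (1−z)^Ω·(Ω − 1 + 2v(1+u)))·(1−z))`. -/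
noncomputable def PhiR (z u v : ℝ) : ℝ :=
  (OmegaR u v + 1 - 2 * v
    + Real.exp (OmegaR u v * Real.log (1 - z)) * (OmegaR u v - 1 + 2 * v))
    / denPhi z u v

/-- The function (6):
`F(z,u,v) = (1 + 2z(v−1))/(1−z)² + (1−z)^{−2}·∫₀^z (∂Φ/∂t − (2v/(1−t))·Φ)·(1−t)² dt`. -/
noncomputable def FR (z u v : ℝ) : ℝ :=
  (1 + 2 * z * (v - 1)) / (1 - z) ^ 2
    + ((1 - z) ^ 2)⁻¹ * ∫ t in (0 : ℝ)..z,
        (deriv (fun s => PhiR s u v) t - 2 * v / (1 - t) * PhiR t u v) * (1 - t) ^ 2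

/-! Integrating `∂Φ/∂t · (1−t)²` by parts turns `F` into
`Φ(z,u,v) + (v−1) · 2(z − J(v))/(1−z)²` with `J(v) = ∫₀^z (1−t) Φ(t,u,v) dt`, as soon as the
denominator of `Φ(·,u,v)` has no zero on `[0,z]`. At `v = 1` that denominator is
`2(1−t(1+u))(1−t)`, so by compactness of `[0,z]` this holds for all `v` near `1`, and `J` is
continuous at `1`. Hence `∂F/∂v(z,u,1) = ∂Φ/∂v(z,u,1) + 2(z − J(1))/(1−z)²`, and everything on the
right is explicit because `Ω = 1`, `∂Ω/∂v = 2(1+u)` and `Φ(t,u,1) = 1/(1−t(1+u))` at `v = 1`. -/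

open Filter Topology MeasureTheory Set
open scoped Interval

theorem ContDiffAt.continuousAt_deriv {𝕜 F : Type*} [NontriviallyNormedField 𝕜]
    [NormedAddCommGroup F] [NormedSpace 𝕜 F] {f : 𝕜 → F} {x : 𝕜}
    (hf : ContDiffAt 𝕜 1 f x) : ContinuousAt (deriv f) x :=
  (hf.fderiv_right (m := 0) le_rfl).continuousAt.clm_apply continuousAt_const

theorem continuousAt_intervalIntegral_of_continuousOn_prod {X E : Type*} [UniformSpace X]
    [LocallyCompactSpace X] [FirstCountableTopology X] [NormedAddCommGroup E] [NormedSpace ℝ E]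
    {f : X → ℝ → E} {x₀ : X} {U : Set X} {a b : ℝ} (hU : U ∈ 𝓝 x₀)
    (hf : ContinuousOn ↿f (U ×ˢ [[a, b]])) :
    ContinuousAt (fun x => ∫ t in a..b, f x t) x₀ := by
  obtain ⟨K, hK, hKU, hKc⟩ := local_compact_nhds hU
  have hunif : TendstoUniformlyOn f (f x₀) (𝓝 x₀) [[a, b]] := by
    simpa only [nhdsWithin_eq_nhds.2 hK] using
      ((hKc.prod isCompact_uIcc).uniformContinuousOn_of_continuous
        (hf.mono (prod_mono hKU subset_rfl))).tendstoUniformlyOn (mem_of_mem_nhds hK)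
  refine hunif.tendsto_intervalIntegral_of_continuousOn ?_
  filter_upwards [hU] with x hx
  exact hf.comp (Continuous.prodMk_right x).continuousOn fun t ht => ⟨hx, ht⟩

theorem hasDerivAt_sub_mul_of_continuousAt {𝕜 : Type*} [NontriviallyNormedField 𝕜]
    {h : 𝕜 → 𝕜} {a : 𝕜} (hh : ContinuousAt h a) :
    HasDerivAt (fun x => (x - a) * h x) (h a) a := by
  rw [hasDerivAt_iff_tendsto_slope]
  refine (hh.tendsto.mono_left nhdsWithin_le_nhds).congr' ?_
  filter_upwards [self_mem_nhdsWithin] with x hx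
  rw [slope_def_field, sub_self, zero_mul, sub_zero,
    mul_div_cancel_left₀ _ (sub_ne_zero.2 hx)]

theorem integral_deriv_sub_div_mul_sq {φ : ℝ → ℝ} {a b : ℝ}
    (hd : ∀ t ∈ [[a, b]], DifferentiableAt ℝ φ t)
    (hint : IntervalIntegrable (deriv φ) volume a b) (c : ℝ) :
    ∫ t in a..b, (deriv φ t - c / (1 - t) * φ t) * (1 - t) ^ 2
      = φ b * (1 - b) ^ 2 - φ a * (1 - a) ^ 2 - (c - 2) * ∫ t in a..b, (1 - t) * φ t := by
  have hφc : ContinuousOn φ [[a, b]] := fun t ht => (hd t ht).continuousAt.continuousWithinAt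
  have hJ : IntervalIntegrable (fun t => (1 - t) * φ t) volume a b :=
    ((continuous_const.sub continuous_id).continuousOn.mul hφc).intervalIntegrable
  have hprod : ∀ t ∈ [[a, b]], HasDerivAt (fun s => φ s * (1 - s) ^ 2)
      (deriv φ t * (1 - t) ^ 2 - 2 * ((1 - t) * φ t)) t := by
    intro t ht
    refine ((hd t ht).hasDerivAt.mul (((hasDerivAt_id' t).const_sub 1).fun_pow 2)).congr_deriv ?_
    push_cast
    ring
  have hint' : IntervalIntegrable (fun t => deriv φ t * (1 - t) ^ 2 - 2 * ((1 - t) * φ t))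
      volume a b :=
    (hint.mul_continuousOn (by fun_prop)).sub (hJ.const_mul 2)
  have hsimp : ∀ t, (deriv φ t - c / (1 - t) * φ t) * (1 - t) ^ 2
      = (deriv φ t * (1 - t) ^ 2 - 2 * ((1 - t) * φ t)) - (c - 2) * ((1 - t) * φ t) := by
    intro t
    -- at `t = 1` both sides vanish, `c / 0` being `0`
    rcases eq_or_ne (1 - t) 0 with h | h
    · simp [h]
    · field_simp; ring
  simp only [hsimp]
  rw [intervalIntegral.integral_sub hint' (hJ.const_mul _), intervalIntegral.integral_const_mul,
    intervalIntegral.integral_eq_sub_of_hasDerivAt hprod hint']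

theorem one_sub_mul_pos {t z a : ℝ} (ht0 : 0 ≤ t) (htz : t ≤ z) (hza : z * a < 1) :
    0 < 1 - t * a := by
  rcases le_total 0 a with ha | ha <;> nlinarith

theorem lt_one_of_mem_uIcc_zero {z t : ℝ} (hz1 : z < 1) (ht : t ∈ [[0, z]]) : t < 1 :=
  ht.2.trans_lt (max_lt one_pos hz1)

theorem OmegaR_one (u : ℝ) : OmegaR u 1 = 1 := by norm_num [OmegaR]

theorem denPhi_one (u : ℝ) {t : ℝ} (ht : t < 1) :
    denPhi t u 1 = 2 * (1 - t * (1 + u)) * (1 - t) := by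
  rw [denPhi, OmegaR_one, one_mul, Real.exp_log (by linarith)]
  ring

theorem PhiR_one (u : ℝ) {t : ℝ} (ht : t < 1) : PhiR t u 1 = (1 - t * (1 + u))⁻¹ := by
  have h1t : 1 - t ≠ 0 := by linarith
  rw [PhiR, denPhi_one u ht, OmegaR_one, one_mul, Real.exp_log (by linarith)]
  -- if `1 - t * (1 + u) = 0`, both sides are the junk value `0`
  rcases eq_or_ne (1 - t * (1 + u)) 0 with h | h
  · simp [h]
  · field_simp; ring

theorem PhiR_zero {u v : ℝ} (h : denPhi 0 u v ≠ 0) : PhiR 0 u v = 1 := by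
  simp only [denPhi, sub_zero, Real.log_one, mul_zero, Real.exp_zero, one_mul, mul_one] at h
  simp only [PhiR, denPhi, sub_zero, Real.log_one, mul_zero, Real.exp_zero, one_mul, mul_one]
  rw [div_eq_one_iff_eq h]
  ring

theorem continuousAt_denPhi_uncurry (u : ℝ) {v t : ℝ} (ht : t < 1) :
    ContinuousAt (fun p : ℝ × ℝ => denPhi p.2 u p.1) (v, t) := by
  have h1t : 1 - (v, t).2 ≠ 0 := by simp only; linarith
  unfold denPhi OmegaR
  fun_prop (disch := assumption)

theorem continuousAt_PhiR_uncurry {u v t : ℝ} (ht : t < 1) (h : denPhi t u v ≠ 0) :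
    ContinuousAt (fun p : ℝ × ℝ => PhiR p.2 u p.1) (v, t) := by
  have h1t : 1 - (v, t).2 ≠ 0 := by simp only; linarith
  refine ContinuousAt.div ?_ (continuousAt_denPhi_uncurry u ht) h
  unfold OmegaR
  fun_prop (disch := assumption)

theorem contDiffAt_PhiR {u v t : ℝ} (ht : t < 1) (h : denPhi t u v ≠ 0) :
    ContDiffAt ℝ 1 (fun s => PhiR s u v) t := by
  have h1t : 1 - t ≠ 0 := by linarith
  unfold PhiR
  unfold denPhi at h ⊢
  fun_prop (disch := assumption)

theorem eventually_denPhi_ne_zero {z u : ℝ} (hz0 : 0 ≤ z) (hz1 : z < 1)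
    (hzu : z * (1 + u) < 1) :
    ∀ᶠ v in 𝓝 1, ∀ t ∈ [[0, z]], denPhi t u v ≠ 0 := by
  refine isCompact_uIcc.eventually_forall_of_forall_eventually fun t ht => ?_
  rw [uIcc_of_le hz0] at ht
  have ht1 : t < 1 := ht.2.trans_lt hz1
  refine (continuousAt_denPhi_uncurry u ht1).eventually_ne ?_
  rw [denPhi_one u ht1]
  have := one_sub_mul_pos ht.1 ht.2 hzu
  have : 0 < 1 - t := by linarith
  positivity

theorem continuousAt_integral_one_sub_mul_PhiR {z u : ℝ} (hz1 : z < 1)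
    (hden : ∀ᶠ v in 𝓝 1, ∀ t ∈ [[0, z]], denPhi t u v ≠ 0) :
    ContinuousAt (fun v => ∫ t in (0 : ℝ)..z, (1 - t) * PhiR t u v) 1 := by
  refine continuousAt_intervalIntegral_of_continuousOn_prod hden fun p hp => ?_
  have ht1 := lt_one_of_mem_uIcc_zero hz1 hp.2
  exact ((continuous_const.sub continuous_snd).continuousAt.mul
    (continuousAt_PhiR_uncurry ht1 (hp.1 p.2 hp.2))).continuousWithinAt

theorem FR_eq {z u v : ℝ} (hz1 : z < 1) (hden : ∀ t ∈ [[0, z]], denPhi t u v ≠ 0) :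
    FR z u v = PhiR z u v
      + (v - 1) * (2 / (1 - z) ^ 2 * (z - ∫ t in (0 : ℝ)..z, (1 - t) * PhiR t u v)) := by
  have hC1 : ∀ t ∈ [[0, z]], ContDiffAt ℝ 1 (fun s => PhiR s u v) t := fun t ht =>
    contDiffAt_PhiR (lt_one_of_mem_uIcc_zero hz1 ht) (hden t ht)
  have hint : IntervalIntegrable (deriv fun s => PhiR s u v) volume 0 z :=
    ContinuousOn.intervalIntegrable fun t ht => (hC1 t ht).continuousAt_deriv.continuousWithinAt
  have h1z : 1 - z ≠ 0 := by linarith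
  rw [FR, integral_deriv_sub_div_mul_sq (fun t ht => (hC1 t ht).differentiableAt one_ne_zero)
    hint, PhiR_zero (hden 0 left_mem_uIcc)]
  field_simp
  ring

theorem hasDerivAt_OmegaR_one (u : ℝ) : HasDerivAt (fun v => OmegaR u v) (2 * (1 + u)) 1 := by
  have hq : HasDerivAt (fun v : ℝ => 1 - 4 * (1 + u) * v * (1 - v)) (4 * (1 + u)) 1 := by
    refine ((((hasDerivAt_id' 1).const_mul (4 * (1 + u))).mul
      ((hasDerivAt_id' 1).const_sub 1)).const_sub 1).congr_deriv ?_
    ring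
  refine ((Real.hasDerivAt_sqrt (by norm_num)).comp 1 hq).congr_deriv ?_
  norm_num
  ring

theorem hasDerivAt_PhiR_one (u : ℝ) {z : ℝ} (hz1 : z < 1) (hzu : z * (1 + u) ≠ 1) :
    HasDerivAt (fun v => PhiR z u v)
      (2 * u * (1 + u) / (1 - z * (1 + u)) ^ 2 * Real.log (1 / (1 - z))
        + ((u + (1 - z) * (2 + u)) * (1 - z * (1 + u)) - 2 * (1 + u) * (1 - z) ^ 2)
          / ((1 - z) * (1 - z * (1 + u)) ^ 2)) 1 := by
  have h1z : 1 - z ≠ 0 := by linarith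
  have hm : 1 - z * (1 + u) ≠ 0 := sub_ne_zero.2 (Ne.symm hzu)
  have hden : denPhi z u 1 ≠ 0 := by
    rw [denPhi_one u hz1]
    exact mul_ne_zero (mul_ne_zero two_ne_zero hm) h1z
  have hΩ := hasDerivAt_OmegaR_one u
  have hE := (hΩ.mul_const (Real.log (1 - z))).exp
  have h2v := (hasDerivAt_id' (1 : ℝ)).const_mul 2
  have h2va := h2v.mul_const (1 + u)
  have hN := ((hΩ.add_const 1).sub h2v).add (hE.mul ((hΩ.sub_const 1).add h2v))
  have hD := (((hΩ.add_const 1).sub h2va).add (hE.mul ((hΩ.sub_const 1).add h2va))).mul_const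
    (1 - z)
  unfold PhiR
  refine (hN.div hD hden).congr_deriv ?_
  simp only [Pi.add_apply, Pi.sub_apply, Pi.mul_apply]
  rw [OmegaR_one, one_mul, Real.exp_log (by linarith), one_div, Real.log_inv]
  have hD1 : (1 + 1 - 2 * 1 * (1 + u) + (1 - z) * (1 - 1 + 2 * 1 * (1 + u))) * (1 - z)
      = 2 * (1 - z * (1 + u)) * (1 - z) := by ring
  rw [hD1]
  field_simp
  ring

theorem integral_one_sub_mul_PhiR_one {z u : ℝ} (hu : 1 + u ≠ 0) (hz0 : 0 ≤ z) (hz1 : z < 1)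
    (hzu : z * (1 + u) < 1) :
    ∫ t in (0 : ℝ)..z, (1 - t) * PhiR t u 1
      = z / (1 + u) - u / (1 + u) ^ 2 * Real.log (1 - z * (1 + u)) := by
  have hpos : ∀ t ∈ [[0, z]], 0 < 1 - t * (1 + u) := by
    intro t ht
    rw [uIcc_of_le hz0] at ht
    exact one_sub_mul_pos ht.1 ht.2 hzu
  have hPhi : EqOn (fun t => (1 - t) * PhiR t u 1) (fun t => (1 - t) * (1 - t * (1 + u))⁻¹)
      [[0, z]] := fun t ht => by
    simp only [PhiR_one u (lt_one_of_mem_uIcc_zero hz1 ht)]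
  rw [intervalIntegral.integral_congr hPhi]
  have hprim : ∀ t ∈ [[0, z]],
      HasDerivAt (fun s => s / (1 + u) - u / (1 + u) ^ 2 * Real.log (1 - s * (1 + u)))
        ((1 - t) * (1 - t * (1 + u))⁻¹) t := by
    intro t ht
    have hlog := ((hasDerivAt_id' t).mul_const (1 + u)).const_sub 1 |>.log (hpos t ht).ne'
    refine (((hasDerivAt_id' t).div_const (1 + u)).sub (hlog.const_mul _)).congr_deriv ?_
    have : 1 - (1 + u) * t ≠ 0 := by linarith [hpos t ht]
    field_simp
    ring
  have hcont : ContinuousOn (fun t => (1 - t) * (1 - t * (1 + u))⁻¹) (uIcc 0 z) :=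
    ContinuousOn.mul (by fun_prop) <| ContinuousOn.inv₀ (by fun_prop) fun t ht => (hpos t ht).ne'
  rw [intervalIntegral.integral_eq_sub_of_hasDerivAt hprim hcont.intervalIntegrable]
  simp

/-- The derivative of `v ↦ F(z,u,v)` at `v = 1` equals the function `E(z,u)` of
formula (8). -/
theorem deriv_F_at_one (u z : ℝ) (hu : -1 < u) (hz : z ∈ Set.Ico (0 : ℝ) 1)
    (hzu : z * (1 + u) < 1) :
    HasDerivAt (fun v => FR z u v)
      (2 * u * (1 + u) / (1 - z * (1 + u)) ^ 2 * Real.log (1 / (1 - z))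
        - 2 * u / ((1 - z) ^ 2 * (1 + u) ^ 2) * Real.log (1 / (1 - z * (1 + u)))
        + z * u * (1 - 2 * z - 3 * u + z ^ 2 + u * z - 2 * u ^ 2 + 2 * u * z ^ 2
            + 3 * u ^ 2 * z + u ^ 2 * z ^ 2)
          / ((1 - z) ^ 2 * (1 + u) * (1 - z * (1 + u)) ^ 2)) 1 := by
  obtain ⟨hz0, hz1⟩ := hz
  have hden := eventually_denPhi_ne_zero hz0 hz1 hzu
  have hFR := hden.mono fun v hv => FR_eq hz1 hv
  have hJ := continuousAt_integral_one_sub_mul_PhiR hz1 hden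
  refine (((hasDerivAt_PhiR_one u hz1 hzu.ne).add (hasDerivAt_sub_mul_of_continuousAt
    (continuousAt_const.mul (continuousAt_const.sub hJ)))).congr_of_eventuallyEq hFR).congr_deriv ?_
  have h1u : 1 + u ≠ 0 := by linarith
  have h1z : 1 - z ≠ 0 := by linarith
  have hm : 1 - (1 + u) * z ≠ 0 := by linarith
  simp only [Pi.sub_apply, Pi.mul_apply]
  rw [integral_one_sub_mul_PhiR_one h1u hz0 hz1 hzu, one_div (1 - z * (1 + u)), Real.log_inv]
  field_simp
  ring
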